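/- Suppose ‖φ_t^i‖ ≤ 1 for all t = 1,…,T and i = 1,…,N. Then for every s > 1 (so that s* = s/(s−1) is finite), R̂(F_s) ≤ (2/(T√N)) · √( R · T^{2/s*} · s* ). -/

import Mathlib

open scoped BigOperators
open RealInnerProductSpace

noncomputable section

/-- The sign `+1`/`-1` associated with a Boolean, used to realize Rademacher variables. -/
def sgn (b : Bool) : ℝ := if b then 1 else -1

/-- Expectation over i.i.d. Rademacher variables `σ_t^i` (`t = 1,…,T`, `i = 1,…,N`),
realized as the uniform average over all sign patterns. -/
def Eσ (T N : ℕ) (f : (Fin T → Fin N → Bool) → ℝ) : ℝ :=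
  (∑ σ : Fin T → Fin N → Bool, f σ) / (Fintype.card (Fin T → Fin N → Bool) : ℝ)

/-- The hypothesis class `F_s`: tuples `(w_1,…,w_T)` such that there is `λ ⪰ 0` with
`‖λ‖_s ≤ 1` and `‖w_t‖² ≤ λ_t² R` for all `t`. -/
def Fs (H : Type*) [NormedAddCommGroup H] [InnerProductSpace ℝ H]
    (T : ℕ) (s R : ℝ) : Set (Fin T → H) :=
  {w | ∃ lam : Fin T → ℝ, (∀ t, 0 ≤ lam t) ∧ (∑ t, lam t ^ s) ≤ 1 ∧
    ∀ t, ‖w t‖ ^ 2 ≤ lam t ^ 2 * R}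

/-- Empirical Rademacher complexity of a class `F ⊆ H^T` of weight tuples, with respect to
the sampled feature vectors `φ_t^i`. -/
def ERC {H : Type*} [NormedAddCommGroup H] [InnerProductSpace ℝ H]
    (T N : ℕ) (φ : Fin T → Fin N → H) (F : Set (Fin T → H)) : ℝ :=
  Eσ T N (fun σ => sSup {v : ℝ | ∃ w ∈ F,
    v = (2 / ((T : ℝ) * N)) * ∑ t, ∑ i, sgn (σ t i) * ⟪w t, φ t i⟫})

/-!
Hölder's inequality with exponents `s` and `q = s*` bounds the supremum over `F_s` by
`√R (∑_t ‖∑_i σ_t^i φ_t^i‖^q)^{1/q}`, and Jensen's inequality moves the expectation inside the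
`q`-th root. What remains is the Khintchine–Kahane bound `E‖∑_i σ_i φ_i‖^q ≤ (qN)^{q/2}`. For
`q = 2m` it follows by induction on `N` from the two-point inequality
`‖x + y‖^{2m} + ‖x - y‖^{2m} ≤ 2 (‖x‖² + (2m - 1)‖y‖²)^m`, whose scalar case is a comparison of
binomial coefficients. For general `q`, write `q/2 = k + β` with `0 < β ≤ 1` and interpolate
between the moments of orders `2k` and `2k + 2` by Hölder's inequality; the constants combine by
weighted AM–GM.
-/

open Finset Real

lemma Nat.choose_two_mul_two_mul_le (m j : ℕ) :
    (2 * m).choose (2 * j) ≤ m.choose j * (2 * m - 1) ^ j := by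
  induction j with
  | zero => simp
  | succ j ih =>
    rcases le_or_gt (2 * j + 2) (2 * m) with h | h
    swap
    · rw [Nat.choose_eq_zero_of_lt (by omega)]; exact Nat.zero_le _
    have h₁ : (2 * m).choose (2 * j + 1) * (2 * j + 1) =
        (2 * m).choose (2 * j) * (2 * (m - j)) := by
      rw [Nat.choose_succ_right_eq, show 2 * m - 2 * j = 2 * (m - j) by omega]
    have h₂ := Nat.choose_succ_right_eq (2 * m) (2 * j + 1)
    have h₃ := Nat.choose_succ_right_eq m j
    have hodd : 2 * m - (2 * j + 1) ≤ (2 * m - 1) * (2 * j + 1) :=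
      (show 2 * m - (2 * j + 1) ≤ 2 * m - 1 by omega).trans
        (Nat.le_mul_of_pos_right _ (by omega))
    refine Nat.le_of_mul_le_mul_right (c := (2 * j + 1) * (2 * j + 2)) ?_ (by positivity)
    calc (2 * m).choose (2 * (j + 1)) * ((2 * j + 1) * (2 * j + 2))
        = (2 * m).choose (2 * j + 1) * (2 * j + 1) * (2 * m - (2 * j + 1)) := by
          rw [mul_right_comm _ _ (2 * m - (2 * j + 1)), ← h₂]; ring_nf
      _ = (2 * m).choose (2 * j) * (2 * (m - j)) * (2 * m - (2 * j + 1)) := by rw [h₁]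
      _ ≤ m.choose j * (2 * m - 1) ^ j * (2 * (m - j)) * ((2 * m - 1) * (2 * j + 1)) := by
          gcongr
      _ = m.choose j * (m - j) * (2 * m - 1) ^ (j + 1) * (2 * (2 * j + 1)) := by ring
      _ = m.choose (j + 1) * (2 * m - 1) ^ (j + 1) * ((2 * j + 1) * (2 * j + 2)) := by
          rw [← h₃]; ring

lemma Finset.sum_range_two_mul_add_one_of_odd {M : Type*} [AddCommMonoid M] (f : ℕ → M)
    (hf : ∀ k, Odd k → f k = 0) (m : ℕ) :
    ∑ k ∈ range (2 * m + 1), f k = ∑ j ∈ range (m + 1), f (2 * j) := by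
  induction m with
  | zero => simp
  | succ m ih =>
    rw [show 2 * (m + 1) + 1 = 2 * m + 1 + 1 + 1 by ring, sum_range_succ, sum_range_succ, ih,
      hf _ ⟨m, rfl⟩, add_zero, sum_range_succ (fun j => f (2 * j)) (m + 1)]
    rfl

lemma pow_add_neg_pow_le {b β : ℝ} (h : |b| ≤ β) (k : ℕ) :
    b ^ k + (-b) ^ k ≤ β ^ k + (-β) ^ k := by
  rcases Nat.even_or_odd k with hk | hk
  · simp only [hk.neg_pow, ← hk.pow_abs b]
    gcongr
  · simp [hk.neg_pow]

lemma add_pow_add_sub_pow_le_of_abs_le {A b β : ℝ} (hA : 0 ≤ A) (h : |b| ≤ β) (m : ℕ) :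
    (A + b) ^ m + (A - b) ^ m ≤ (A + β) ^ m + (A - β) ^ m := by
  have expand (x : ℝ) : (A + x) ^ m + (A - x) ^ m =
      ∑ k ∈ range (m + 1), (x ^ k + (-x) ^ k) * A ^ (m - k) * m.choose k := by
    rw [add_comm A, sub_eq_neg_add, add_pow, add_pow, ← sum_add_distrib]
    exact sum_congr rfl fun k _ => by ring
  rw [expand, expand]
  refine sum_le_sum fun k _ => ?_
  gcongr ?_ * _ * _
  exact pow_add_neg_pow_le h k

lemma add_pow_two_mul_add_sub_pow_two_mul_le (a c : ℝ) (m : ℕ) :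
    (a + c) ^ (2 * m) + (a - c) ^ (2 * m) ≤ 2 * (a ^ 2 + ((2 * m - 1 : ℕ) : ℝ) * c ^ 2) ^ m := by
  set κ : ℝ := ((2 * m - 1 : ℕ) : ℝ)
  calc (a + c) ^ (2 * m) + (a - c) ^ (2 * m)
      = ∑ k ∈ range (2 * m + 1), (c ^ k + (-c) ^ k) * a ^ (2 * m - k) * (2 * m).choose k := by
        rw [add_comm a, sub_eq_neg_add, add_pow, add_pow, ← sum_add_distrib]
        exact sum_congr rfl fun k _ => by ring
    _ = ∑ j ∈ range (m + 1), 2 * (c ^ 2) ^ j * (a ^ 2) ^ (m - j) * (2 * m).choose (2 * j) := by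
        rw [sum_range_two_mul_add_one_of_odd _ (fun k hk => by simp [hk.neg_pow])]
        refine sum_congr rfl fun j _ => ?_
        rw [← Nat.mul_sub, (even_two_mul j).neg_pow, pow_mul, pow_mul]
        ring
    _ ≤ ∑ j ∈ range (m + 1), 2 * (κ * c ^ 2) ^ j * (a ^ 2) ^ (m - j) * m.choose j := by
        refine sum_le_sum fun j _ => ?_
        have hchoose : ((2 * m).choose (2 * j) : ℝ) ≤ m.choose j * κ ^ j := by
          simp only [κ]
          exact_mod_cast Nat.choose_two_mul_two_mul_le m j
        calc 2 * (c ^ 2) ^ j * (a ^ 2) ^ (m - j) * (2 * m).choose (2 * j)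
            ≤ 2 * (c ^ 2) ^ j * (a ^ 2) ^ (m - j) * (m.choose j * κ ^ j) := by gcongr
          _ = _ := by ring
    _ = 2 * (a ^ 2 + κ * c ^ 2) ^ m := by
        rw [add_comm (a ^ 2), add_pow, mul_sum]
        exact sum_congr rfl fun j _ => by ring

lemma Fintype.expect_bool (f : Bool → ℝ) : 𝔼 b, f b = (f true + f false) / 2 := by
  rw [Fintype.expect_eq_sum_div_card, Fintype.sum_bool, Fintype.card_bool, Nat.cast_two]

lemma Fintype.expect_fin_cons {α M : Type*} [Fintype α] [AddCommMonoid M] [Module ℚ≥0 M]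
    {n : ℕ} (f : (Fin (n + 1) → α) → M) :
    𝔼 v, f v = 𝔼 w : Fin n → α, 𝔼 a, f (Fin.cons a w) := by
  rw [← Fintype.expect_equiv (Fin.consEquiv fun _ => α) (fun p => f (Fin.consEquiv _ p)) f
    (fun _ => rfl), ← univ_product_univ, expect_product, expect_comm]
  rfl

lemma Fintype.expect_comp_eval {ι α M : Type*} [Fintype ι] [DecidableEq ι] [Fintype α]
    [Nonempty α] [AddCommMonoid M] [Module ℚ≥0 M] (i : ι) (G : α → M) :
    𝔼 f : ι → α, G (f i) = 𝔼 a, G a := by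
  rw [Fintype.expect_equiv (Equiv.funSplitAt i α) (fun f => G (f i)) (fun p => G p.1)
    (fun _ => rfl), ← univ_product_univ, expect_product]
  simp only [expect_const]

lemma Finset.expect_rpow_natCast_add_le {ι : Type*} (s : Finset ι) {Y : ι → ℝ}
    (hY : ∀ i, 0 ≤ Y i) (k : ℕ) {β : ℝ} (hβ₀ : 0 < β) (hβ₁ : β ≤ 1) :
    𝔼 i ∈ s, Y i ^ ((k : ℝ) + β) ≤
      (𝔼 i ∈ s, Y i ^ k) ^ (1 - β) * (𝔼 i ∈ s, Y i ^ (k + 1)) ^ β := by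
  have h := compact_inner_le_weight_mul_Lp_of_nonneg s ((one_le_inv₀ hβ₀).mpr hβ₁)
    (w := fun i => Y i ^ k) (f := fun i => Y i ^ β) (fun i => pow_nonneg (hY i) k)
    (fun i => rpow_nonneg (hY i) β)
  simp only [inv_inv, rpow_rpow_inv (hY _) hβ₀.ne', ← pow_succ] at h
  refine le_of_eq_of_le (expect_congr rfl fun i _ => ?_) h
  rw [rpow_add' (hY i) (by positivity), rpow_natCast]

lemma Finset.expect_rpow_one_div_le {ι : Type*} {s : Finset ι} (hs : s.Nonempty) {Z : ι → ℝ}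
    (hZ : ∀ i, 0 ≤ Z i) {q : ℝ} (hq : 1 ≤ q) :
    𝔼 i ∈ s, Z i ^ (1 / q) ≤ (𝔼 i ∈ s, Z i) ^ (1 / q) := by
  have h := compact_inner_le_weight_mul_Lp_of_nonneg s hq (w := fun _ => 1)
    (f := fun i => Z i ^ (1 / q)) (fun _ => zero_le_one) (fun i => rpow_nonneg (hZ i) _)
  simpa [expect_const hs, one_div, rpow_inv_rpow (hZ _) (by positivity : q ≠ 0)] using h

lemma exists_nat_add_eq_of_pos {x : ℝ} (hx : 0 < x) :
    ∃ (k : ℕ) (β : ℝ), 0 < β ∧ β ≤ 1 ∧ x = k + β := by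
  have hceil : 1 ≤ ⌈x⌉₊ := Nat.one_le_iff_ne_zero.mpr (Nat.ceil_pos.mpr hx).ne'
  refine ⟨⌈x⌉₊ - 1, x - (⌈x⌉₊ - 1 : ℕ), ?_, ?_, by ring⟩ <;> push_cast [Nat.cast_sub hceil]
  · linarith [Nat.ceil_lt_add_one hx.le]
  · linarith [Nat.le_ceil x]

lemma moment_interpolation_le (k : ℕ) {β x : ℝ} (hβ₀ : 0 < β) (hβ₁ : β ≤ 1)
    (hkβ : 1 ≤ 2 * (k + β)) (hx : 0 ≤ x) :
    ((((2 * k - 1 : ℕ) : ℝ) * x) ^ k) ^ (1 - β) *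
        ((((2 * (k + 1) - 1 : ℕ) : ℝ) * x) ^ (k + 1)) ^ β ≤
      (2 * (k + β) * x) ^ ((k : ℝ) + β) := by
  have hgap : 0 ≤ 2 * β ^ 2 - β + k := by
    rcases k with _ | k
    · push_cast at hkβ ⊢
      nlinarith
    · push_cast
      nlinarith
  set p : ℝ := k + β
  set a : ℝ := ((2 * k - 1 : ℕ) : ℝ) * x
  set b : ℝ := ((2 * (k + 1) - 1 : ℕ) : ℝ) * x
  have hp : 0 < p := by positivity
  have ha : 0 ≤ a := by positivity
  have hb : 0 ≤ b := by positivity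
  set w₁ : ℝ := k * (1 - β) / p
  set w₂ : ℝ := (k + 1) * β / p
  have hw₁ : 0 ≤ w₁ := div_nonneg (mul_nonneg k.cast_nonneg (by linarith)) hp.le
  have hw₂ : 0 ≤ w₂ := by positivity
  have hw : w₁ + w₂ = 1 := by
    rw [← add_div, div_eq_one_iff_eq hp.ne']
    ring
  have e₁ : (a ^ k) ^ (1 - β) = (a ^ w₁) ^ p := by
    rw [← rpow_natCast, ← rpow_mul ha, ← rpow_mul ha]
    simp only [w₁]
    field_simp
  have e₂ : (b ^ (k + 1)) ^ β = (b ^ w₂) ^ p := by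
    rw [← rpow_natCast, ← rpow_mul hb, ← rpow_mul hb]
    simp only [w₂]
    field_simp
    push_cast
    rw [mul_comm]
  rw [e₁, e₂, ← mul_rpow (by positivity) (by positivity)]
  refine rpow_le_rpow (by positivity) ?_ hp.le
  refine (geom_mean_le_arith_mean2_weighted hw₁ hw₂ ha hb hw).trans ?_
  have hka : (k : ℝ) * ((2 * k - 1 : ℕ) : ℝ) = k * (2 * k - 1) := by
    rcases k with _ | k
    · simp
    · push_cast [show 2 * (k + 1) - 1 = 2 * k + 1 by omega]
      ring
  have hkb : ((2 * (k + 1) - 1 : ℕ) : ℝ) = 2 * k + 1 := by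
    push_cast [show 2 * (k + 1) - 1 = 2 * k + 1 by omega]
    ring
  simp only [w₁, w₂, a, b, hkb]
  rw [div_mul_eq_mul_div, div_mul_eq_mul_div, ← add_div, div_le_iff₀ hp]
  rw [show (k : ℝ) * (1 - β) * (((2 * k - 1 : ℕ) : ℝ) * x) =
    k * ((2 * k - 1 : ℕ) : ℝ) * ((1 - β) * x) by ring, hka]
  nlinarith [mul_nonneg hx hgap]

lemma two_div_mul_sqrt_mul_rpow_eq {T N q : ℝ} (R : ℝ) (hT : 0 ≤ T) (hN : 0 ≤ N)
    (hq : 0 < q) :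
    2 / (T * N) * (√R * (T * (q * N) ^ (q / 2)) ^ (1 / q)) =
      2 / (T * √N) * √(R * T ^ (2 / q) * q) := by
  have h₁ : (T * (q * N) ^ (q / 2)) ^ (1 / q) = T ^ (1 / q) * (√q * √N) := by
    rw [mul_rpow hT (by positivity), ← rpow_mul (by positivity), sqrt_eq_rpow, sqrt_eq_rpow,
      ← mul_rpow hq.le hN]
    congr 2
    field_simp
  have h₂ : √(R * T ^ (2 / q) * q) = √R * T ^ (1 / q) * √q := by
    rw [sqrt_mul' _ hq.le, sqrt_mul' _ (by positivity), sqrt_eq_rpow (T ^ _), ← rpow_mul hT]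
    congr 3
    field_simp
  rw [h₁, h₂]
  rcases hN.eq_or_lt with rfl | hN
  · simp
  rcases hT.eq_or_lt with rfl | hT
  · simp
  field_simp
  rw [sq_sqrt hN.le]
  ring

lemma Eσ_eq_expect (T N : ℕ) (f : (Fin T → Fin N → Bool) → ℝ) : Eσ T N f = 𝔼 σ, f σ :=
  (Fintype.expect_eq_sum_div_card f).symm

section Rademacher

variable {H : Type*} [NormedAddCommGroup H] [InnerProductSpace ℝ H]

lemma norm_add_pow_add_norm_sub_pow_le (x y : H) (m : ℕ) :
    ‖x + y‖ ^ (2 * m) + ‖x - y‖ ^ (2 * m) ≤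
      2 * (‖x‖ ^ 2 + ((2 * m - 1 : ℕ) : ℝ) * ‖y‖ ^ 2) ^ m := by
  have hb : |2 * ⟪x, y⟫| ≤ 2 * (‖x‖ * ‖y‖) := by
    rw [abs_mul, abs_two]
    gcongr
    exact abs_real_inner_le_norm x y
  calc ‖x + y‖ ^ (2 * m) + ‖x - y‖ ^ (2 * m)
      = (‖x‖ ^ 2 + ‖y‖ ^ 2 + 2 * ⟪x, y⟫) ^ m + (‖x‖ ^ 2 + ‖y‖ ^ 2 - 2 * ⟪x, y⟫) ^ m := by
        rw [pow_mul, pow_mul, norm_add_sq_real, norm_sub_sq_real]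
        ring
    _ ≤ (‖x‖ ^ 2 + ‖y‖ ^ 2 + 2 * (‖x‖ * ‖y‖)) ^ m +
          (‖x‖ ^ 2 + ‖y‖ ^ 2 - 2 * (‖x‖ * ‖y‖)) ^ m :=
        add_pow_add_sub_pow_le_of_abs_le (by positivity) hb m
    _ = (‖x‖ + ‖y‖) ^ (2 * m) + (‖x‖ - ‖y‖) ^ (2 * m) := by
        rw [pow_mul, pow_mul]
        ring
    _ ≤ _ := add_pow_two_mul_add_sub_pow_two_mul_le _ _ m

def rademacherSum {n : ℕ} (φ : Fin n → H) (v : Fin n → Bool) : H := ∑ i, sgn (v i) • φ i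

lemma rademacherSum_cons {n : ℕ} (φ : Fin (n + 1) → H) (b : Bool) (w : Fin n → Bool) :
    rademacherSum φ (Fin.cons b w) = sgn b • φ 0 + rademacherSum (Fin.tail φ) w := by
  simp [rademacherSum, Fin.sum_univ_succ, Fin.tail]

theorem expect_norm_rademacherSum_pow_le {n : ℕ} (φ : Fin n → H) (hφ : ∀ i, ‖φ i‖ ≤ 1)
    (m : ℕ) : 𝔼 v, ‖rademacherSum φ v‖ ^ (2 * m) ≤ (((2 * m - 1 : ℕ) : ℝ) * n) ^ m := by
  induction n generalizing m with
  | zero => cases m <;> simp [rademacherSum]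
  | succ n ih =>
    set κ : ℝ := ((2 * m - 1 : ℕ) : ℝ)
    have hκ : 0 ≤ κ := Nat.cast_nonneg _
    have hmoment (k : ℕ) (hk : k ≤ m) :
        𝔼 w, ‖rademacherSum (Fin.tail φ) w‖ ^ (2 * k) ≤ (κ * n) ^ k := by
      refine (ih _ (fun i => hφ _) k).trans ?_
      gcongr
      simp only [κ]
      exact_mod_cast Nat.sub_le_sub_right (Nat.mul_le_mul_left 2 hk) 1
    calc 𝔼 v, ‖rademacherSum φ v‖ ^ (2 * m)
        = 𝔼 w, (‖rademacherSum (Fin.tail φ) w + φ 0‖ ^ (2 * m)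
            + ‖rademacherSum (Fin.tail φ) w - φ 0‖ ^ (2 * m)) / 2 := by
          simp only [Fintype.expect_fin_cons, Fintype.expect_bool, rademacherSum_cons, sgn]
          simp [add_comm, sub_eq_neg_add]
      _ ≤ 𝔼 w, (‖rademacherSum (Fin.tail φ) w‖ ^ 2 + κ) ^ m := by
          refine expect_le_expect fun w _ => ?_
          rw [div_le_iff₀' two_pos]
          refine (norm_add_pow_add_norm_sub_pow_le (rademacherSum (Fin.tail φ) w) (φ 0) m).trans ?_
          gcongr
          exact mul_le_of_le_one_right hκ (pow_le_one₀ (norm_nonneg _) (hφ 0))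
      _ = ∑ k ∈ range (m + 1),
            (𝔼 w, ‖rademacherSum (Fin.tail φ) w‖ ^ (2 * k)) * κ ^ (m - k) * m.choose k := by
          simp only [add_pow, expect_sum_comm, expect_mul, pow_mul]
      _ ≤ ∑ k ∈ range (m + 1), (κ * n) ^ k * κ ^ (m - k) * m.choose k := by
          gcongr with k hk
          exact hmoment k (Nat.lt_succ_iff.mp (mem_range.mp hk))
      _ = (κ * (n + 1 : ℕ)) ^ m := by
          rw [← add_pow]
          push_cast
          ring

theorem expect_norm_rademacherSum_rpow_le {n : ℕ} (φ : Fin n → H) (hφ : ∀ i, ‖φ i‖ ≤ 1)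
    {q : ℝ} (hq : 1 ≤ q) : 𝔼 v, ‖rademacherSum φ v‖ ^ q ≤ (q * n) ^ (q / 2) := by
  obtain ⟨k, β, hβ₀, hβ₁, hkβ⟩ := exists_nat_add_eq_of_pos (show 0 < q / 2 by positivity)
  have hY (v : Fin n → Bool) (r : ℝ) :
      ‖rademacherSum φ v‖ ^ (2 * r) = (‖rademacherSum φ v‖ ^ 2) ^ r := by
    rw [← rpow_natCast, ← rpow_mul (norm_nonneg _)]
    norm_num
  have hmoment (m : ℕ) :
      𝔼 v, (‖rademacherSum φ v‖ ^ 2) ^ m ≤ (((2 * m - 1 : ℕ) : ℝ) * n) ^ m := by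
    simpa only [← pow_mul] using expect_norm_rademacherSum_pow_le φ hφ m
  have hmoment_nonneg (m : ℕ) : 0 ≤ 𝔼 v, (‖rademacherSum φ v‖ ^ 2) ^ m :=
    expect_nonneg fun _ _ => by positivity
  calc 𝔼 v, ‖rademacherSum φ v‖ ^ q
      = 𝔼 v, (‖rademacherSum φ v‖ ^ 2) ^ ((k : ℝ) + β) := by
        simp only [← hY, ← hkβ, mul_div_cancel₀ q two_ne_zero]
    _ ≤ (𝔼 v, (‖rademacherSum φ v‖ ^ 2) ^ k) ^ (1 - β) *
          (𝔼 v, (‖rademacherSum φ v‖ ^ 2) ^ (k + 1)) ^ β :=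
        expect_rpow_natCast_add_le _ (fun _ => sq_nonneg _) k hβ₀ hβ₁
    _ ≤ ((((2 * k - 1 : ℕ) : ℝ) * n) ^ k) ^ (1 - β) *
          ((((2 * (k + 1) - 1 : ℕ) : ℝ) * n) ^ (k + 1)) ^ β :=
        mul_le_mul (rpow_le_rpow (hmoment_nonneg k) (hmoment k) (by linarith))
          (rpow_le_rpow (hmoment_nonneg _) (hmoment _) hβ₀.le) (by positivity) (by positivity)
    _ ≤ (2 * (k + β) * n) ^ ((k : ℝ) + β) :=
        moment_interpolation_le k hβ₀ hβ₁ (by linarith) n.cast_nonneg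
    _ = (q * n) ^ (q / 2) := by rw [← hkβ, mul_div_cancel₀ q two_ne_zero]

lemma expect_sum_norm_rademacherSum_rpow_le {T N : ℕ} (φ : Fin T → Fin N → H)
    (hφ : ∀ t i, ‖φ t i‖ ≤ 1) {q : ℝ} (hq : 1 ≤ q) :
    𝔼 σ : Fin T → Fin N → Bool, ∑ t, ‖rademacherSum (φ t) (σ t)‖ ^ q ≤
      T * (q * N) ^ (q / 2) := by
  rw [expect_sum_comm]
  calc ∑ t, 𝔼 σ : Fin T → Fin N → Bool, ‖rademacherSum (φ t) (σ t)‖ ^ q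
      ≤ ∑ _t : Fin T, (q * N) ^ (q / 2) := by
        refine sum_le_sum fun t _ => ?_
        rw [Fintype.expect_comp_eval t (fun v => ‖rademacherSum (φ t) v‖ ^ q)]
        exact expect_norm_rademacherSum_rpow_le (φ t) (hφ t) hq
    _ = T * (q * N) ^ (q / 2) := by simp

lemma sum_inner_le_of_mem_Fs {T : ℕ} {s q R : ℝ} (hsq : s.HolderConjugate q)
    {w : Fin T → H} (hw : w ∈ Fs H T s R) (u : Fin T → H) :
    ∑ t, ⟪w t, u t⟫ ≤ √R * (∑ t, ‖u t‖ ^ q) ^ (1 / q) := by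
  obtain ⟨lam, hlam₀, hlam, hwR⟩ := hw
  have hnorm (t : Fin T) : ‖w t‖ ≤ lam t * √R := by
    calc ‖w t‖ = √(‖w t‖ ^ 2) := (sqrt_sq (norm_nonneg _)).symm
      _ ≤ √(lam t ^ 2 * R) := sqrt_le_sqrt (hwR t)
      _ = lam t * √R := by rw [sqrt_mul (sq_nonneg _), sqrt_sq (hlam₀ t)]
  have hHolder : ∑ t, lam t * ‖u t‖ ≤ (∑ t, ‖u t‖ ^ q) ^ (1 / q) := by
    refine (inner_le_Lp_mul_Lq_of_nonneg univ hsq (fun t _ => hlam₀ t)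
      (fun t _ => norm_nonneg (u t))).trans (mul_le_of_le_one_left
      (rpow_nonneg (sum_nonneg fun t _ => rpow_nonneg (norm_nonneg _) q) _) ?_)
    exact rpow_le_one (sum_nonneg fun t _ => rpow_nonneg (hlam₀ t) s) hlam
      (one_div_pos.mpr hsq.pos).le
  calc ∑ t, ⟪w t, u t⟫ ≤ ∑ t, lam t * √R * ‖u t‖ :=
        sum_le_sum fun t _ => (real_inner_le_norm _ _).trans (by gcongr; exact hnorm t)
    _ = √R * ∑ t, lam t * ‖u t‖ := by rw [mul_sum]; exact sum_congr rfl fun t _ => by ring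
    _ ≤ √R * (∑ t, ‖u t‖ ^ q) ^ (1 / q) := by gcongr

lemma sSup_correlation_Fs_le {T N : ℕ} {s q R : ℝ} (hsq : s.HolderConjugate q)
    (φ : Fin T → Fin N → H) (σ : Fin T → Fin N → Bool) :
    sSup {v : ℝ | ∃ w ∈ Fs H T s R,
        v = (2 / ((T : ℝ) * N)) * ∑ t, ∑ i, sgn (σ t i) * ⟪w t, φ t i⟫} ≤
      2 / ((T : ℝ) * N) * (√R * (∑ t, ‖rademacherSum (φ t) (σ t)‖ ^ q) ^ (1 / q)) := by
  refine Real.sSup_le ?_ (by positivity)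
  rintro _ ⟨w, hw, rfl⟩
  gcongr
  calc ∑ t, ∑ i, sgn (σ t i) * ⟪w t, φ t i⟫ = ∑ t, ⟪w t, rademacherSum (φ t) (σ t)⟫ := by
        simp only [rademacherSum, inner_sum, real_inner_smul_right]
    _ ≤ _ := sum_inner_le_of_mem_Fs hsq hw _

end Rademacher

theorem erc_Fs_bound_general {H : Type*} [NormedAddCommGroup H] [InnerProductSpace ℝ H]
    (T N : ℕ) (R : ℝ)
    (φ : Fin T → Fin N → H) (hφ : ∀ t i, ‖φ t i‖ ≤ 1)
    (s : ℝ) (hs : 1 < s) :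
    ERC T N φ (Fs H T s R) ≤
      (2 / ((T : ℝ) * Real.sqrt N)) *
        Real.sqrt (R * (T : ℝ) ^ (2 / (s / (s - 1))) * (s / (s - 1))) := by
  set q := s / (s - 1)
  have hsq : s.HolderConjugate q := HolderConjugate.conjExponent hs
  set c : ℝ := 2 / ((T : ℝ) * N)
  calc ERC T N φ (Fs H T s R)
      ≤ 𝔼 σ : Fin T → Fin N → Bool,
          c * (√R * (∑ t, ‖rademacherSum (φ t) (σ t)‖ ^ q) ^ (1 / q)) := by
        rw [ERC, Eσ_eq_expect]
        exact expect_le_expect fun σ _ => sSup_correlation_Fs_le hsq φ σ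
    _ ≤ c * (√R * (𝔼 σ : Fin T → Fin N → Bool,
          ∑ t, ‖rademacherSum (φ t) (σ t)‖ ^ q) ^ (1 / q)) := by
        rw [← mul_expect, ← mul_expect]
        gcongr
        exact expect_rpow_one_div_le univ_nonempty
          (fun σ => sum_nonneg fun t _ => rpow_nonneg (norm_nonneg _) q) hsq.symm.lt.le
    _ ≤ c * (√R * (T * (q * N) ^ (q / 2)) ^ (1 / q)) := by
        gcongr
        exact expect_sum_norm_rademacherSum_rpow_le φ hφ hsq.symm.lt.le
    _ = 2 / ((T : ℝ) * √N) * √(R * (T : ℝ) ^ (2 / q) * q) :=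
        two_div_mul_sqrt_mul_rpow_eq R T.cast_nonneg N.cast_nonneg hsq.symm.pos

/-- If `‖φ_t^i‖ ≤ 1` for all `t, i`, then for `s > 1` (with
`s* = s/(s-1)`), `R̂(F_s) ≤ (2/(T√N)) √( R · T^{2/s*} · s* )`. -/
theorem erc_Fs_bound {H : Type*} [NormedAddCommGroup H] [InnerProductSpace ℝ H]
    (T N : ℕ) (hT : 0 < T) (hN : 0 < N) (R : ℝ) (hR : 0 < R)
    (φ : Fin T → Fin N → H) (hφ : ∀ t i, ‖φ t i‖ ≤ 1)
    (s : ℝ) (hs : 1 < s) :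
    ERC T N φ (Fs H T s R) ≤
      (2 / ((T : ℝ) * Real.sqrt N)) *
        Real.sqrt (R * (T : ℝ) ^ (2 / (s / (s - 1))) * (s / (s - 1))) :=
  erc_Fs_bound_general T N R φ hφ s hs

end
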